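/- arXiv:math/0207113 — 3 statements merged into one kernel-verified Lean document; each statement's English description precedes it below -/
import Mathlib

section
/- For any p×p matrix S over a field F with p > 1, there exists an invertible p×p matrix W such that S + W is invertible. -/
open Matrix

/-- For any `p × p` matrix `S` with `p > 1`, there is an invertible `W`
with `S + W` invertible. -/
theorem exists_invertible_add (F : Type*) [Field F] (p : ℕ) (hp : 1 < p)
    (S : Matrix (Fin p) (Fin p) F) :
    ∃ W : Matrix (Fin p) (Fin p) F, IsUnit W ∧ IsUnit (S + W) := by
  obtain ⟨m, rfl⟩ : ∃ m, p = m + 2 := ⟨p - 2, by omega⟩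
  obtain ⟨L, L', d, hS⟩ := Matrix.Pivot.exists_list_transvec_mul_diagonal_mul_list_transvec S
  set Lm := (L.map Matrix.TransvectionStruct.toMatrix).prod with hLm
  set Lm' := (L'.map Matrix.TransvectionStruct.toMatrix).prod with hLm'
  set σ : Equiv.Perm (Fin (m+2)) := finRotate (m+2) with hσ
  set P : Matrix (Fin (m+2)) (Fin (m+2)) F := σ.symm.toPEquiv.toMatrix with hP
  set Q : Matrix (Fin (m+2)) (Fin (m+2)) F := σ.toPEquiv.toMatrix with hQdef
  have hQP : Q * P = 1 := by
    rw [hP, hQdef, ← PEquiv.toMatrix_trans, ← Equiv.toPEquiv_trans]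
    simp
  have hPQ : P * Q = 1 := by
    rw [hP, hQdef, ← PEquiv.toMatrix_trans, ← Equiv.toPEquiv_trans]
    simp
  set c := d (Fin.last (m+1)) with hc
  set Tv := Matrix.transvection (0 : Fin (m+2)) (Fin.last (m+1)) c with hTv
  set B := Tv - P * Matrix.diagonal d with hB
  have hiff : ∀ i j : Fin (m+2), σ.symm i = j ↔ i = j + 1 := by
    intro i j
    rw [Equiv.symm_apply_eq, hσ, finRotate_succ_apply]
  have hPD : ∀ i j, (P * Matrix.diagonal d) i j = if i = j + 1 then d j else 0 := by
    intro i j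
    rw [hP, PEquiv.toMatrix_toPEquiv_mul]
    by_cases h : i = j + 1
    · have h2 : σ.symm i = j := (hiff i j).2 h
      rw [if_pos h, Matrix.submatrix_apply, id, h2, Matrix.diagonal_apply_eq]
    · have h2 : ¬ σ.symm i = j := fun hh => h ((hiff i j).1 hh)
      rw [if_neg h, Matrix.submatrix_apply, id, Matrix.diagonal_apply_ne _ h2]
  have hent : ∀ i j, B i j = (if i = j then (1:F) else 0)
      + (if 0 = i ∧ Fin.last (m+1) = j then c else 0)
      - (if i = j + 1 then d j else 0) := by
    intro i j
    rw [hB, Matrix.sub_apply, hPD, hTv, Matrix.transvection, Matrix.add_apply,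
      Matrix.one_apply, Matrix.single]
    rfl
  have hBtri : B.BlockTriangular OrderDual.toDual := by
    intro i j hij
    have hij' : (i : ℕ) < (j : ℕ) := hij
    rw [hent]
    have h1 : ¬ i = j := by
      intro h; rw [h] at hij'; omega
    by_cases h0 : 0 = i ∧ Fin.last (m+1) = j
    · have hj1 : i = j + 1 := by
        rw [← h0.1, ← h0.2, Fin.last_add_one]
      rw [if_neg h1, if_pos h0, if_pos hj1, ← h0.2, ← hc]
      ring
    · have hj1 : ¬ i = j + 1 := by
        intro hh
        have hv := congrArg Fin.val hh
        rw [Fin.add_def] at hv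
        simp only [Fin.val_one] at hv
        have hj2 : (j : ℕ) < m + 2 := j.isLt
        by_cases hje : (j : ℕ) = m + 1
        · rw [hje] at hv
          rw [Nat.mod_self] at hv
          have hi0 : i = 0 := Fin.ext (by simp [hv])
          have hjl : j = Fin.last (m+1) := Fin.ext (by simp [Fin.val_last, hje])
          exact h0 ⟨hi0.symm, hjl.symm⟩
        · rw [Nat.mod_eq_of_lt (by omega)] at hv
          omega
      rw [if_neg h1, if_neg h0, if_neg hj1]
      ring
  have hBdiag : ∀ i, B i i = 1 := by
    intro i
    rw [hent]
    have h1 : ¬ i = i + 1 := by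
      intro hh
      have hv := congrArg Fin.val hh
      rw [Fin.add_def] at hv
      simp only [Fin.val_one] at hv
      by_cases hie : (i : ℕ) = m + 1
      · rw [hie] at hv; rw [Nat.mod_self] at hv; omega
      · rw [Nat.mod_eq_of_lt (by omega)] at hv; omega
    have h0 : ¬ (0 = i ∧ Fin.last (m+1) = i) := by
      rintro ⟨ha, hb⟩
      have h2 := ha.trans hb.symm
      have := congrArg Fin.val h2
      simp [Fin.val_last] at this
    rw [if_pos rfl, if_neg h0, if_neg h1]
    ring
  have hdetB : B.det = 1 := by
    rw [Matrix.det_of_lowerTriangular B hBtri]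
    simp [hBdiag]
  have hUB : IsUnit B := (Matrix.isUnit_iff_isUnit_det B).2 (by rw [hdetB]; exact isUnit_one)
  have hUQ : IsUnit Q := ⟨⟨Q, P, hQP, hPQ⟩, rfl⟩
  have hUL : IsUnit Lm := (Matrix.isUnit_iff_isUnit_det _).2
    (by rw [hLm, Matrix.TransvectionStruct.det_toMatrix_prod]; exact isUnit_one)
  have hUL' : IsUnit Lm' := (Matrix.isUnit_iff_isUnit_det _).2
    (by rw [hLm', Matrix.TransvectionStruct.det_toMatrix_prod]; exact isUnit_one)
  have h0last : (0 : Fin (m+2)) ≠ Fin.last (m+1) := by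
    intro h
    have := congrArg Fin.val h
    simp [Fin.val_last] at this
  have hUTv : IsUnit Tv := (Matrix.isUnit_iff_isUnit_det _).2
    (by rw [hTv, Matrix.det_transvection_of_ne _ _ h0last c]; exact isUnit_one)
  refine ⟨Lm * (Q * B) * Lm', (hUL.mul (hUQ.mul hUB)).mul hUL', ?_⟩
  have key : Matrix.diagonal d + Q * B = Q * Tv := by
    rw [hB, Matrix.mul_sub, ← Matrix.mul_assoc, hQP, Matrix.one_mul]
    abel
  have : S + Lm * (Q * B) * Lm' = Lm * (Q * Tv) * Lm' := by
    rw [hS, ← key, Matrix.mul_add, Matrix.add_mul]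
  rw [this]
  exact (hUL.mul (hUQ.mul hUTv)).mul hUL'
end

section
/- For every even positive integer n, there exists an invertible n×n matrix over GF(2) such that every 2×2 block in its uniform partition into 2×2 blocks is invertible. -/
/-!
Let `ω = !![1, 1; 1, 0]`, a root of `X² + X + 1` in `M₂(GF(2))`, and `J` the all-ones `m × m`
matrix. The matrix `J ⊗ 1 + 1 ⊗ ω` has diagonal blocks `1 + ω = ω²` and off-diagonal blocks `1`.
Its summands `P = J ⊗ 1` and `Q = 1 ⊗ ω` commute, and `P² = m P` is `0` or `P` according to the
parity of `m`. In characteristic `2` either case makes `P + Q` invertible: `(P + Q)² = Q²` when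
`P² = 0`, and `(P + Q) (P + Q + 1) = 1` when `P² = P`.
-/

open Matrix Kronecker

section Ring

variable {R : Type*} [Ring R] {P Q : R}

lemma isUnit_of_sq_add_add_one_eq_zero (hQ : Q ^ 2 + Q + 1 = 0) : IsUnit Q := by
  refine ⟨⟨Q, -(Q + 1), ?_, ?_⟩, rfl⟩
  · calc Q * -(Q + 1) = 1 - (Q ^ 2 + Q + 1) := by noncomm_ring
      _ = 1 := by rw [hQ, sub_zero]
  · calc -(Q + 1) * Q = 1 - (Q ^ 2 + Q + 1) := by noncomm_ring
      _ = 1 := by rw [hQ, sub_zero]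

lemma isUnit_add_of_mul_self_eq_zero (hPQ : Commute P Q) (hQ : Q ^ 2 + Q + 1 = 0)
    (two : (2 : R) = 0) (hP : P * P = 0) : IsUnit (P + Q) := by
  have hsq : (P + Q) ^ 2 = Q ^ 2 :=
    calc (P + Q) ^ 2 = P * P + (Q * P - P * Q) + 2 * (P * Q) + Q ^ 2 := by noncomm_ring
      _ = Q ^ 2 := by rw [hP, hPQ.eq, sub_self, two, zero_mul, zero_add, zero_add, zero_add]
  rw [← isUnit_pow_iff two_ne_zero, hsq]
  exact (isUnit_of_sq_add_add_one_eq_zero hQ).pow 2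

lemma isUnit_add_of_mul_self_eq_self (hPQ : Commute P Q) (hQ : Q ^ 2 + Q + 1 = 0)
    (two : (2 : R) = 0) (hP : P * P = P) : IsUnit (P + Q) := by
  have hinv : (P + Q) * (P + Q + 1) = 1 :=
    calc (P + Q) * (P + Q + 1)
        = (P * P - P) + (Q * P - P * Q) + 2 * (P * Q + P - 1) + (Q ^ 2 + Q + 1) + 1 := by
          noncomm_ring
      _ = 1 := by simp only [hP, hPQ.eq, sub_self, two, zero_mul, hQ, zero_add]
  have hcomm : Commute (P + Q) (P + Q + 1) := (Commute.refl _).add_right (Commute.one_right _)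
  exact ⟨⟨P + Q, P + Q + 1, hinv, hcomm.eq.symm.trans hinv⟩, rfl⟩

end Ring

namespace Matrix

variable {R l n : Type*}

lemma of_const_one_mul_self [Semiring R] [Fintype n] :
    (of fun _ _ : n => (1 : R)) * (of fun _ _ => 1) = (Fintype.card n : R) • of fun _ _ => 1 := by
  ext i j
  simp [mul_apply]

lemma of_kronecker_one_add_one_kronecker_apply [Semiring R] [DecidableEq l] [DecidableEq n]
    (X : Matrix l l R) (Y : Matrix n n R) (i j : l) :
    (of fun a b => (X ⊗ₖ 1 + 1 ⊗ₖ Y : Matrix (l × n) (l × n) R) (i, a) (j, b)) =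
      X i j • 1 + (1 : Matrix l l R) i j • Y := by
  ext a b
  simp

lemma isUnit_of_const_one_kronecker_one_add_one_kronecker [Fintype l] [DecidableEq l]
    [Fintype n] [DecidableEq n] {ω : Matrix n n (ZMod 2)} (hω : ω ^ 2 + ω + 1 = 0) :
    IsUnit ((of fun _ _ : l => (1 : ZMod 2)) ⊗ₖ (1 : Matrix n n (ZMod 2)) + 1 ⊗ₖ ω) := by
  set J : Matrix l l (ZMod 2) := of fun _ _ => 1
  have hPQ : Commute (J ⊗ₖ (1 : Matrix n n (ZMod 2))) (1 ⊗ₖ ω) := by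
    simp only [Commute, SemiconjBy, ← mul_kronecker_mul, mul_one, one_mul]
  have hQ : (1 ⊗ₖ ω : Matrix (l × n) (l × n) (ZMod 2)) ^ 2 + 1 ⊗ₖ ω + 1 = 0 := by
    rw [sq, ← mul_kronecker_mul, one_mul, ← one_kronecker_one, ← kronecker_add,
      ← kronecker_add, ← sq, hω, kronecker_zero]
  have two : (2 : Matrix (l × n) (l × n) (ZMod 2)) = 0 := by
    ext
    simp only [ofNat_apply, zero_apply]
    split_ifs <;> rfl
  have hP : J ⊗ₖ (1 : Matrix n n (ZMod 2)) * J ⊗ₖ 1 = (Fintype.card l : ZMod 2) • J ⊗ₖ 1 := by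
    rw [← mul_kronecker_mul, of_const_one_mul_self, one_mul, smul_kronecker]
  rcases (by decide : ∀ x : ZMod 2, x = 0 ∨ x = 1) (Fintype.card l) with hl | hl
  · exact isUnit_add_of_mul_self_eq_zero hPQ hQ two (by rw [hP, hl, zero_smul])
  · exact isUnit_add_of_mul_self_eq_self hPQ hQ two (by rw [hP, hl, one_smul])

end Matrix

theorem exists_block_invertible_gf2_general (m : ℕ) :
    ∃ M : Matrix (Fin m × Fin 2) (Fin m × Fin 2) (ZMod 2), IsUnit M ∧
      ∀ i j : Fin m,
        IsUnit (Matrix.of fun a b : Fin 2 => M (i, a) (j, b)) := by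
  let ω : Matrix (Fin 2) (Fin 2) (ZMod 2) := !![1, 1; 1, 0]
  refine ⟨(of fun _ _ => 1) ⊗ₖ 1 + 1 ⊗ₖ ω,
    isUnit_of_const_one_kronecker_one_add_one_kronecker (by decide), fun i j => ?_⟩
  rw [of_kronecker_one_add_one_kronecker_apply, of_apply, one_smul]
  by_cases hij : i = j
  · rw [hij, one_apply_eq, one_smul, isUnit_iff_isUnit_det, show (1 + ω).det = 1 by decide]
    exact isUnit_one
  · rw [one_apply_ne hij, zero_smul, add_zero]
    exact isUnit_one

/-- For every even positive integer `n = 2 * m`, there is an invertible `n × n` matrix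
over `GF(2)` (indexed by `Fin m × Fin 2`) all of whose `2 × 2` blocks are invertible. -/
theorem exists_block_invertible_gf2 (m : ℕ) (hm : 0 < m) :
    ∃ M : Matrix (Fin m × Fin 2) (Fin m × Fin 2) (ZMod 2), IsUnit M ∧
      ∀ i j : Fin m,
        IsUnit (Matrix.of fun a b : Fin 2 => M (i, a) (j, b)) :=
  exists_block_invertible_gf2_general m
end

section
/- Over GF(2), for every 2×2 matrix S there exists A ∈ {I, [[1,1],[1,0]], [[0,1],[1,1]]} and invertible 2×2 matrices P, Q with S = P⁻¹·diag(I_r, 0)·Q⁻¹ (r = rank S) such that S + P⁻¹·A·Q⁻¹ is invertible and P⁻¹·A·Q⁻¹ is invertible. -/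
/-!
The single choice `A = [[1,1],[1,0]]` works for every rank: `A`, `A + diag(1,0)` and `A + I`
have determinant `±1` over any commutative ring. Writing `S = P⁻¹ D Q⁻¹` in rank normal form
`D = diag(I_r, 0)`, the matrix `S + P⁻¹ A Q⁻¹ = P⁻¹ (D + A) Q⁻¹` is then invertible.
-/

open Matrix

theorem Matrix.exists_isUnit_mul_mul_eq_diagonal_rank {K : Type*} [Field K] {n : ℕ}
    (M : Matrix (Fin n) (Fin n) K) :
    ∃ V U : Matrix (Fin n) (Fin n) K, IsUnit V ∧ IsUnit U ∧
      V * M * U = diagonal (fun i : Fin n => if (i : ℕ) < M.rank then 1 else 0) := by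
  obtain ⟨V, U, e, hV, hU, hVMU⟩ := M.exists_rank_normal_form
  have hr : M.rank ≤ n := M.rank_le_width
  let f : Fin n ≃ Fin M.rank ⊕ Fin (Fintype.card (Fin n) - M.rank) :=
    (finCongr (by rw [Fintype.card_fin]; omega)).trans finSumFinEquiv.symm
  have hf : (fromBlocks 1 0 0 0 : Matrix _ _ K).submatrix f f =
      diagonal (fun i : Fin n => if (i : ℕ) < M.rank then 1 else 0) := by
    rw [← diagonal_one, ← diagonal_zero, fromBlocks_diagonal, submatrix_diagonal_equiv]
    congr 1
    funext i
    by_cases hi : (i : ℕ) < M.rank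
    · have : f i = Sum.inl ⟨i, hi⟩ :=
        finSumFinEquiv_symm_apply_castAdd (⟨i, hi⟩ : Fin M.rank)
      simp [this, hi]
    · have : f i = Sum.inr ⟨i - M.rank, by rw [Fintype.card_fin]; omega⟩ := by
        rw [← finSumFinEquiv_symm_apply_natAdd]
        refine congrArg finSumFinEquiv.symm (Fin.ext ?_)
        simp only [finCongr_apply, Fin.val_cast, Fin.natAdd_mk]
        omega
      simp [this, hi]
  -- `exists_rank_normal_form` only gives the normal form up to the permutation `σ`.
  let σ : Equiv.Perm (Fin n) := e.trans f.symm
  refine ⟨(1 : Matrix _ _ K).submatrix σ.symm (Equiv.refl _) * V,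
    U * (1 : Matrix _ _ K).submatrix (Equiv.refl _) σ.symm,
    ((isUnit_submatrix_equiv _ _).2 isUnit_one).mul hV,
    hU.mul ((isUnit_submatrix_equiv _ _).2 isUnit_one), ?_⟩
  rw [← hf, ← Matrix.mul_assoc, Matrix.mul_assoc _ V, Matrix.mul_assoc _ (V * M), hVMU,
    one_submatrix_mul, mul_submatrix_one]
  ext i j
  simp [σ]

theorem Matrix.eq_nonsing_inv_mul_mul_nonsing_inv {n R : Type*} [Fintype n] [DecidableEq n]
    [CommRing R] {M D V U : Matrix n n R} (hV : IsUnit V) (hU : IsUnit U) (h : V * M * U = D) :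
    M = V⁻¹ * D * U⁻¹ := by
  rw [← h, ← Matrix.mul_assoc V⁻¹,
    mul_nonsing_inv_cancel_right _ _ ((isUnit_iff_isUnit_det U).1 hU),
    nonsing_inv_mul_cancel_left _ _ ((isUnit_iff_isUnit_det V).1 hV)]

theorem Matrix.isUnit_nonsing_inv_mul_mul_nonsing_inv {n R : Type*} [Fintype n] [DecidableEq n]
    [CommRing R] {V U X : Matrix n n R} (hV : IsUnit V) (hU : IsUnit U) (hX : IsUnit X) :
    IsUnit (V⁻¹ * X * U⁻¹) :=
  ((isUnit_nonsing_inv_iff.2 hV).mul hX).mul (isUnit_nonsing_inv_iff.2 hU)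

theorem isUnit_fibonacci_matrix {R : Type*} [CommRing R] :
    IsUnit (!![1, 1; 1, 0] : Matrix (Fin 2) (Fin 2) R) := by
  rw [isUnit_iff_isUnit_det, det_fin_two_of]
  simp

theorem isUnit_diagonal_add_fibonacci_matrix {R : Type*} [CommRing R] (r : ℕ) :
    IsUnit (diagonal (fun i : Fin 2 => if (i : ℕ) < r then (1 : R) else 0) + !![1, 1; 1, 0]) := by
  rw [isUnit_iff_isUnit_det, det_fin_two]
  rcases r with _ | _ | r <;> simp

/-- Over `GF(2)`, for every `2 × 2` matrix `S` there exist
`A ∈ {I, [[1,1],[1,0]], [[0,1],[1,1]]}` and invertible `P`, `Q` with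
`S = P⁻¹ ⬝ diag(I_r, 0) ⬝ Q⁻¹` (`r = rank S`) such that `P⁻¹⬝A⬝Q⁻¹` and
`S + P⁻¹⬝A⬝Q⁻¹` are invertible. -/
theorem gf2_completion_choice (S : Matrix (Fin 2) (Fin 2) (ZMod 2)) :
    ∃ A ∈ ({1, !![1, 1; 1, 0], !![0, 1; 1, 1]} :
        Set (Matrix (Fin 2) (Fin 2) (ZMod 2))),
      ∃ P Q : Matrix (Fin 2) (Fin 2) (ZMod 2), IsUnit P ∧ IsUnit Q ∧
        S = P⁻¹ *
            Matrix.diagonal (fun i : Fin 2 => if (i : ℕ) < S.rank then 1 else 0) * Q⁻¹ ∧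
        IsUnit (P⁻¹ * A * Q⁻¹) ∧
        IsUnit (S + P⁻¹ * A * Q⁻¹) := by
  obtain ⟨P, Q, hP, hQ, hPSQ⟩ := S.exists_isUnit_mul_mul_eq_diagonal_rank
  have hS := eq_nonsing_inv_mul_mul_nonsing_inv hP hQ hPSQ
  refine ⟨!![1, 1; 1, 0], by simp, P, Q, hP, hQ, hS,
    isUnit_nonsing_inv_mul_mul_nonsing_inv hP hQ isUnit_fibonacci_matrix, ?_⟩
  rw [hS, ← add_mul, ← mul_add]
  exact isUnit_nonsing_inv_mul_mul_nonsing_inv hP hQ (isUnit_diagonal_add_fibonacci_matrix _)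
end
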